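/- When the participation and treatment models are correctly specified, the inverse-probability weight reproduces target-population averaging: if p(x) := ℙ(R = true | X = x) and e(x) := ℙ(A = a | X = x, R = true), then for every function g : 𝒳 → ℝ, E[ ((1 − p(X(ω))) · 1{R = true, A = a}(ω) / (e(X(ω)) · p(X(ω)))) · g(X(ω)) ] = E[ 1{R = false}(ω) · g(X(ω)) ]. -/

import Mathlib

open Finset

attribute [local instance] Classical.propDecidable

variable {Ω : Type*}

/-- Probability of an event. -/
noncomputable def pr [Fintype Ω] (P : Ω → ℝ) (E : Ω → Prop) : ℝ :=
  ∑ ω, if E ω then P ω else 0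

/-- Expectation of a real random variable. -/
noncomputable def ex [Fintype Ω] (P : Ω → ℝ) (Z : Ω → ℝ) : ℝ :=
  ∑ ω, P ω * Z ω

/-- Conditional probability ℙ(F | E) = ℙ(F ∩ E)/ℙ(E). -/
noncomputable def cpr [Fintype Ω] (P : Ω → ℝ) (F E : Ω → Prop) : ℝ :=
  pr P (fun ω => F ω ∧ E ω) / pr P E

/-- Conditional expectation E[Z | E] = E[Z·1_E]/ℙ(E). -/
noncomputable def cex [Fintype Ω] (P : Ω → ℝ) (Z : Ω → ℝ) (E : Ω → Prop) : ℝ :=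
  (∑ ω, if E ω then P ω * Z ω else 0) / pr P E

/-!
Stratify by the value x of X. On the stratum {X = x}, writing q = ℙ(X = x), the correctly
specified models give ℙ(R, A = a, X = x) = e(x) p(x) q and ℙ(¬R, X = x) = (1 - p(x)) q, so the
weight (1 - p)/(e p) turns the trial-and-treated mass of the stratum into its target mass.
Positivity guarantees e(x) p(x) ≠ 0 on every stratum of positive mass; the others contribute
nothing to either side.
-/

section Probability

variable [Fintype Ω] (P : Ω → ℝ)

theorem pr_congr {E F : Ω → Prop} (h : ∀ ω, E ω ↔ F ω) : pr P E = pr P F := by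
  simp only [pr, h]

theorem pr_nonneg (hP0 : ∀ ω, 0 ≤ P ω) (E : Ω → Prop) : 0 ≤ pr P E :=
  sum_nonneg fun ω _ => by split_ifs <;> simp [hP0 ω]

theorem pr_mono (hP0 : ∀ ω, 0 ≤ P ω) {E F : Ω → Prop} (h : ∀ ω, E ω → F ω) :
    pr P E ≤ pr P F :=
  sum_le_sum fun ω _ => by
    by_cases hE : E ω
    · simp [hE, h ω hE]
    · by_cases hF : F ω <;> simp [hE, hF, hP0 ω]

theorem pr_and_add_pr_not_and (F E : Ω → Prop) :
    pr P (fun ω => F ω ∧ E ω) + pr P (fun ω => ¬F ω ∧ E ω) = pr P E := by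
  simp only [pr, ← sum_add_distrib]
  refine sum_congr rfl fun ω _ => ?_
  by_cases hF : F ω <;> by_cases hE : E ω <;> simp [hF, hE]

theorem cpr_mul_pr (hP0 : ∀ ω, 0 ≤ P ω) (F E : Ω → Prop) :
    cpr P F E * pr P E = pr P (fun ω => F ω ∧ E ω) := by
  by_cases hE : pr P E = 0
  · have hFE : pr P (fun ω => F ω ∧ E ω) = 0 :=
      le_antisymm (hE ▸ pr_mono P hP0 fun _ h => h.2) (pr_nonneg P hP0 _)
    simp [hE, hFE]
  · exact div_mul_cancel₀ _ hE

theorem ex_indicator_mul_comp_eq_sum_pr {α : Type*} (E : Ω → Prop) [DecidablePred E]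
    (X : Ω → α) (c : α → ℝ) :
    ex P (fun ω => (if E ω then 1 else 0) * c (X ω))
      = ∑ x ∈ univ.image X, c x * pr P (fun ω => E ω ∧ X ω = x) := by
  rw [ex, ← sum_fiberwise_of_maps_to fun ω _ => mem_image_of_mem X (mem_univ ω)]
  refine sum_congr rfl fun x _ => ?_
  rw [pr, mul_sum, sum_filter]
  refine sum_congr rfl fun ω _ => ?_
  by_cases hX : X ω = x
  · subst hX
    by_cases hE : E ω <;> simp [hE, mul_comm]
  · simp [hX]

/-- `T` is trial membership, `S` treatment and `E` a stratum of the covariates. -/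
theorem ip_weight_mul_pr_stratum (hP0 : ∀ ω, 0 ≤ P ω) (T S E : Ω → Prop)
    (hpos : 0 < pr P E → 0 < pr P (fun ω => S ω ∧ E ω ∧ T ω)) :
    (1 - cpr P T E) / (cpr P S (fun ω => E ω ∧ T ω) * cpr P T E)
        * pr P (fun ω => (T ω ∧ S ω) ∧ E ω)
      = pr P (fun ω => ¬T ω ∧ E ω) := by
  have htrial := cpr_mul_pr P hP0 T E
  have htreated := cpr_mul_pr P hP0 S (fun ω => E ω ∧ T ω)
  rw [pr_congr P (E := fun ω => E ω ∧ T ω) fun _ => and_comm, ← htrial,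
    ← mul_assoc] at htreated
  rw [pr_congr P (E := fun ω => (T ω ∧ S ω) ∧ E ω) (F := fun ω => S ω ∧ E ω ∧ T ω)
    fun _ => by tauto, ← htreated]
  have htarget : pr P (fun ω => ¬T ω ∧ E ω) = (1 - cpr P T E) * pr P E := by
    linarith [pr_and_add_pr_not_and P T E]
  rw [htarget]
  by_cases hw : cpr P S (fun ω => E ω ∧ T ω) * cpr P T E = 0
  · have hE : pr P E = 0 := by
      by_contra hne
      have := hpos (lt_of_le_of_ne (pr_nonneg P hP0 E) (Ne.symm hne))
      rw [← htreated, hw, zero_mul] at this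
      exact lt_irrefl 0 this
    simp [hE]
  · rw [div_mul_eq_mul_div, mul_div_assoc, mul_div_cancel_left₀ _ hw]

end Probability

theorem ip_weight_reproduces_target_average_general
    {𝒳 𝒯 : Type*} [Fintype Ω]
    (P : Ω → ℝ) (hP0 : ∀ ω, 0 ≤ P ω)
    (X : Ω → 𝒳) (A : Ω → 𝒯) (R : Ω → Bool) (a : 𝒯)
    -- positivity
    (hpos : ∀ x, 0 < pr P (fun ω => X ω = x) →
      0 < pr P (fun ω => A ω = a ∧ X ω = x ∧ R ω = true))
    -- correctly specified participation and treatment models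
    (p e : 𝒳 → ℝ)
    (hp : ∀ x, p x = cpr P (fun ω => R ω = true) (fun ω => X ω = x))
    (he : ∀ x, e x = cpr P (fun ω => A ω = a) (fun ω => X ω = x ∧ R ω = true)) :
    ∀ g : 𝒳 → ℝ,
      ex P (fun ω =>
          ((1 - p (X ω)) * (if R ω = true ∧ A ω = a then (1 : ℝ) else 0)
              / (e (X ω) * p (X ω)))
            * g (X ω))
        = ex P (fun ω => (if R ω = false then (1 : ℝ) else 0) * g (X ω)) := by
  intro g
  calc _ = ex P (fun ω => (if R ω = true ∧ A ω = a then (1 : ℝ) else 0)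
              * ((1 - p (X ω)) / (e (X ω) * p (X ω)) * g (X ω))) := by
          congr 1; funext ω; ring
    _ = ∑ x ∈ univ.image X, g x * pr P (fun ω => R ω = false ∧ X ω = x) := by
          rw [ex_indicator_mul_comp_eq_sum_pr P _ X fun x => (1 - p x) / (e x * p x) * g x]
          refine sum_congr rfl fun x _ => ?_
          rw [hp, he, mul_right_comm, ip_weight_mul_pr_stratum P hP0 _ _ _ (hpos x), mul_comm]
          simp only [Bool.not_eq_true]
    _ = _ := (ex_indicator_mul_comp_eq_sum_pr P _ X g).symm

/-- When the participation and treatment models are correctly specified,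
the inverse-probability weight reproduces target-population averaging. -/
theorem ip_weight_reproduces_target_average
    {𝒳 𝒯 : Type*} [Fintype Ω] [Fintype 𝒳] [Fintype 𝒯]
    (P : Ω → ℝ) (hP0 : ∀ ω, 0 ≤ P ω) (hP1 : ∑ ω, P ω = 1)
    (X : Ω → 𝒳) (A : Ω → 𝒯) (R : Ω → Bool) (a : 𝒯)
    -- positivity
    (hpos : ∀ x, 0 < pr P (fun ω => X ω = x) →
      0 < pr P (fun ω => A ω = a ∧ X ω = x ∧ R ω = true))
    -- correctly specified participation and treatment models
    (p e : 𝒳 → ℝ)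
    (hp : ∀ x, p x = cpr P (fun ω => R ω = true) (fun ω => X ω = x))
    (he : ∀ x, e x = cpr P (fun ω => A ω = a) (fun ω => X ω = x ∧ R ω = true)) :
    ∀ g : 𝒳 → ℝ,
      ex P (fun ω =>
          ((1 - p (X ω)) * (if R ω = true ∧ A ω = a then (1 : ℝ) else 0)
              / (e (X ω) * p (X ω)))
            * g (X ω))
        = ex P (fun ω => (if R ω = false then (1 : ℝ) else 0) * g (X ω)) :=
  ip_weight_reproduces_target_average_general P hP0 X A R a hpos p e hp he
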